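/- Let G be a simple connected graph on n vertices, let γ > 0, and let S ⊆ V with |S| ≥ γn. Then the largest eigenvalue of the symmetric matrix R_S satisfies −λ(R_S) ≥ γ/τ_rel. -/

import Mathlib

open MeasureTheory ProbabilityTheory Finset
open scoped ENNReal NNReal

namespace PP

variable {V : Type*}

/-- The number of edges of a graph. -/
noncomputable def numEdges (G : SimpleGraph V) : ℕ := Nat.card G.edgeSet

/-- The transition matrix of the (lazy) population random walk. -/
noncomputable def popMat [Fintype V] [DecidableEq V] (G : SimpleGraph V) [DecidableRel G.Adj] :
    Matrix V V ℝ :=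
  Matrix.of fun u v =>
    if u = v then 1 - (G.degree u : ℝ) / (2 * numEdges G)
    else if G.Adj u v then 1 / (2 * numEdges G) else 0

/-- The second largest eigenvalue of the population random walk matrix, via the
Rayleigh quotient over vectors orthogonal to the constant vector. -/
noncomputable def lambdaTwo [Fintype V] [DecidableEq V] (G : SimpleGraph V)
    [DecidableRel G.Adj] : ℝ :=
  sSup {r : ℝ | ∃ x : V → ℝ, x ≠ 0 ∧ (∑ v, x v) = 0 ∧
    r = (∑ u, ∑ v, x u * popMat G u v * x v) / (∑ v, (x v) ^ 2)}

/-- The relaxation time of the population random walk. -/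
noncomputable def tauRel [Fintype V] [DecidableEq V] (G : SimpleGraph V)
    [DecidableRel G.Adj] : ℝ :=
  1 / (1 - lambdaTwo G)

/-- The edge expansion of a graph. -/
noncomputable def edgeExpansion [Fintype V] [DecidableEq V] (G : SimpleGraph V) [DecidableRel G.Adj] : ℝ :=
  sInf {r : ℝ | ∃ S : Finset V, S.Nonempty ∧ 2 * S.card ≤ Fintype.card V ∧
    r = ((Finset.univ.filter fun p : V × V => p.1 ∈ S ∧ p.2 ∉ S ∧ G.Adj p.1 p.2).card : ℝ) /
        (S.card : ℝ)}

/-- The scheduler `e` is an i.i.d. sequence, each step being an ordered pair of adjacent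
nodes chosen uniformly at random among the `2m` ordered pairs of adjacent nodes. -/
def IsUniformSched [Fintype V] (G : SimpleGraph V) {Ω : Type*} [MeasurableSpace Ω]
    (μ : Measure Ω) (e : ℕ → Ω → V × V) : Prop :=
  iIndepFun (m := fun _ : ℕ => (⊤ : MeasurableSpace (V × V))) e μ ∧
    (∀ t : ℕ, ∀ p : V × V, G.Adj p.1 p.2 →
      μ {ω | e t ω = p} = ENNReal.ofReal (1 / (2 * (numEdges G : ℝ)))) ∧
    (∀ t : ℕ, ∀ p : V × V, ¬ G.Adj p.1 p.2 → μ {ω | e t ω = p} = 0)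

/-- A population protocol with state set `Λ`. -/
structure Protocol (Λ : Type*) where
  trans : Λ × Λ → Λ × Λ
  input : Bool → Λ
  output : Λ → Bool

variable {Λ : Type*}

/-- One interaction at an ordered pair `p`: the states of the two nodes are updated
by the transition function, all other nodes are unchanged. -/
def applyStep [DecidableEq V] (Ξ : Λ × Λ → Λ × Λ) (x : V → Λ) (p : V × V) : V → Λ :=
  fun w =>
    if w = p.1 then (Ξ (x p.1, x p.2)).1
    else if w = p.2 then (Ξ (x p.1, x p.2)).2
    else x w

/-- The execution of a protocol from initial configuration `x0` under schedule `σ`. -/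
def exec [DecidableEq V] (Ξ : Λ × Λ → Λ × Λ) (x0 : V → Λ) (σ : ℕ → V × V) : ℕ → V → Λ
  | 0 => x0
  | t + 1 => applyStep Ξ (exec Ξ x0 σ t) (σ t)

/-- A configuration is stable if every configuration reachable from it (by finitely many
interactions along edges of `G`) has the same output at every node. -/
def IsStable [DecidableEq V] (G : SimpleGraph V) (Ξ : Λ × Λ → Λ × Λ) (out : Λ → Bool)
    (x : V → Λ) : Prop :=
  ∀ y, Relation.ReflTransGen
      (fun a b => ∃ p : V × V, G.Adj p.1 p.2 ∧ b = applyStep Ξ a p) x y →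
    ∀ v, out (y v) = out (x v)

/-- The stabilization time of an execution (`∞` if it never stabilizes). -/
noncomputable def stabTime [DecidableEq V] (G : SimpleGraph V) (Ξ : Λ × Λ → Λ × Λ)
    (out : Λ → Bool) (x0 : V → Λ) (σ : ℕ → V × V) : ℝ≥0∞ :=
  sInf {c : ℝ≥0∞ | ∃ t : ℕ, c = (t : ℝ≥0∞) ∧ IsStable G Ξ out (exec Ξ x0 σ t)}

/-- The number of nodes with input value `b`. -/
def cnt [Fintype V] (f : V → Bool) (b : Bool) : ℕ :=
  (Finset.univ.filter fun v => f v = b).card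

/-- The (normalized) bias of an input. -/
noncomputable def bias [Fintype V] (f : V → Bool) : ℝ :=
  |(cnt f false : ℝ) - (cnt f true : ℝ)| / (Fintype.card V : ℝ)

/-- The majority input value. -/
def majOf [Fintype V] (f : V → Bool) : Bool :=
  decide (cnt f false < cnt f true)

/-- The initial configuration determined by an input. -/
def initConfig (P : Protocol Λ) (f : V → Bool) : V → Λ := fun v => P.input (f v)

/-- A protocol solves exact majority (w.r.t. a given scheduler) if on every input with
positive bias it almost surely reaches a stable configuration in which every node
outputs the majority input value. -/
def SolvesMajority [Fintype V] [DecidableEq V] (G : SimpleGraph V) (P : Protocol Λ)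
    {Ω : Type*} [MeasurableSpace Ω] (μ : Measure Ω) (e : ℕ → Ω → V × V) : Prop :=
  ∀ f : V → Bool, 0 < bias f →
    μ {ω | ∃ t : ℕ,
        IsStable G P.trans P.output (exec P.trans (initConfig P f) (fun s => e s ω) t) ∧
        ∀ v, P.output (exec P.trans (initConfig P f) (fun s => e s ω) t v) = majOf f} = 1

/-- The expected stabilization time on input `f`. -/
noncomputable def expStab [Fintype V] [DecidableEq V] (G : SimpleGraph V) (P : Protocol Λ)
    {Ω : Type*} [MeasurableSpace Ω] (μ : Measure Ω) (e : ℕ → Ω → V × V) (f : V → Bool) :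
    ℝ≥0∞ :=
  ∫⁻ ω, stabTime G P.trans P.output (initConfig P f) (fun s => e s ω) ∂μ

/-- States of the two-species annihilation dynamics. -/
inductive ABC : Type
  | A | B | C
deriving DecidableEq

/-- The annihilation rule: `A` and `B` annihilate into `C`; otherwise states are swapped. -/
def annRule : ABC × ABC → ABC × ABC
  | (ABC.A, ABC.B) => (ABC.C, ABC.C)
  | (ABC.B, ABC.A) => (ABC.C, ABC.C)
  | (x, y) => (y, x)

/-- The number of nodes in a given annihilation state. -/
def cntABC [Fintype V] (x : V → ABC) (a : ABC) : ℕ :=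
  (Finset.univ.filter fun v => x v = a).card

/-- The bias of an annihilation configuration. -/
noncomputable def annBias [Fintype V] (x : V → ABC) : ℝ :=
  ((cntABC x ABC.A : ℝ) - (cntABC x ABC.B : ℝ)) / (Fintype.card V : ℝ)

/-- The extinction time of the annihilation dynamics: the first time at which
no node is in state `B`. -/
noncomputable def extTime [Fintype V] [DecidableEq V] (x0 : V → ABC) (σ : ℕ → V × V) :
    ℝ≥0∞ :=
  sInf {c : ℝ≥0∞ | ∃ t : ℕ, c = (t : ℝ≥0∞) ∧ ∀ v, exec annRule x0 σ t v ≠ ABC.B}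

/-- The `ε`-clearing time of the annihilation dynamics. -/
noncomputable def clrTime [Fintype V] [DecidableEq V] (ε : ℝ) (x0 : V → ABC)
    (σ : ℕ → V × V) : ℝ≥0∞ :=
  sInf {c : ℝ≥0∞ | ∃ t : ℕ, c = (t : ℝ≥0∞) ∧
    ((∀ v, exec annRule x0 σ t v ≠ ABC.B) ∨
      (1 - ε) * (Fintype.card V : ℝ) ≤ (cntABC (exec annRule x0 σ t) ABC.C : ℝ))}

/-- The `±1/0` encoding of annihilation states. -/
def zOf : ABC → ℤ
  | ABC.A => 1
  | ABC.B => -1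
  | ABC.C => 0

/-- The influencer sets of the broadcast process. -/
def influencers [DecidableEq V] (σ : ℕ → V × V) : ℕ → V → Set V
  | 0, v => {v}
  | t + 1, v =>
    if v = (σ t).1 then influencers σ t v ∪ influencers σ t (σ t).2
    else if v = (σ t).2 then influencers σ t v ∪ influencers σ t (σ t).1
    else influencers σ t v

/-- The first time `v` is influenced by `u`. -/
noncomputable def hearTime [DecidableEq V] (σ : ℕ → V × V) (u v : V) : ℝ≥0∞ :=
  sInf {c : ℝ≥0∞ | ∃ t : ℕ, c = (t : ℝ≥0∞) ∧ u ∈ influencers σ t v}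

/-- The broadcast time from a node `u`. -/
noncomputable def bcastTime [Fintype V] [DecidableEq V] (σ : ℕ → V × V) (u : V) : ℝ≥0∞ :=
  ⨆ v, hearTime σ u v

/-- The broadcast time from a set `A` of nodes. -/
noncomputable def bcastTimeSet [Fintype V] [DecidableEq V] (σ : ℕ → V × V) (A : Set V) :
    ℝ≥0∞ :=
  ⨆ v, ⨅ u ∈ A, hearTime σ u v

/-- `Y` is a geometric random variable with parameter `p`, taking values in `{1,2,…}`. -/
def IsGeom {Ω : Type*} [MeasurableSpace Ω] (μ : Measure Ω) (Y : Ω → ℕ) (p : ℝ) : Prop :=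
  μ {ω | Y ω = 0} = 0 ∧
    ∀ k : ℕ, μ {ω | Y ω = k + 1} = ENNReal.ofReal ((1 - p) ^ k * p)

/-- The generator `Q = P − I` of the population random walk. -/
noncomputable def popQ [Fintype V] [DecidableEq V] (G : SimpleGraph V) [DecidableRel G.Adj] :
    Matrix V V ℝ :=
  popMat G - 1

/-- The principal submatrix of `Q` on a set `U` of vertices. -/
noncomputable def subQ [Fintype V] [DecidableEq V] (G : SimpleGraph V) [DecidableRel G.Adj]
    (U : Finset V) : Matrix {v // v ∈ U} {v // v ∈ U} ℝ :=
  (popQ G).submatrix (fun i => (i : V)) (fun i => (i : V))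

/-- The largest eigenvalue of a symmetric matrix, via the Rayleigh quotient. -/
noncomputable def maxEig {ι : Type*} [Fintype ι] (M : Matrix ι ι ℝ) : ℝ :=
  sSup {r : ℝ | ∃ x : ι → ℝ, x ≠ 0 ∧ r = (∑ i, ∑ j, x i * M i j * x j) / (∑ i, (x i) ^ 2)}

/-- The matrix `R_S`. -/
noncomputable def RS [Fintype V] [DecidableEq V] (G : SimpleGraph V) [DecidableRel G.Adj]
    (S : Finset V) : Matrix V V ℝ :=
  Matrix.of fun u v =>
    if u ∈ S then (if u = v then maxEig (subQ G Sᶜ) else 0)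
    else if v ∈ S then 0
    else popQ G u v

end PP

section Stmt10Aux

open Finset

set_option linter.unusedSectionVars false

namespace Stmt10Aux

variable {ι : Type*} [Fintype ι]

lemma sum_sq_pos {x : ι → ℝ} (hx : x ≠ 0) : 0 < ∑ i, x i ^ 2 := by
  have h : ∃ i, x i ≠ 0 := by
    by_contra h; push_neg at h; exact hx (funext h)
  obtain ⟨i, hi⟩ := h
  exact Finset.sum_pos' (fun j _ => sq_nonneg _) ⟨i, Finset.mem_univ i, by positivity⟩

lemma quad_pair (w : ι → ι → ℝ) (hw : ∀ i j, 0 ≤ w i j)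
    (hsym : ∀ i j, w i j = w j i) (x : ι → ℝ) :
    ∑ i, ∑ j, x i * w i j * x j ≤ ∑ i, (∑ j, w i j) * x i ^ 2 := by
  have key : ∑ i, ∑ j, x i * w i j * x j ≤
      ∑ i, ∑ j, (w i j * x i ^ 2 / 2 + w i j * x j ^ 2 / 2) := by
    refine Finset.sum_le_sum fun i _ => Finset.sum_le_sum fun j _ => ?_
    nlinarith [mul_nonneg (hw i j) (sq_nonneg (x i - x j))]
  refine key.trans_eq ?_
  have h2 : ∀ i : ι, ∑ j, w i j * x i ^ 2 / 2 = (∑ j, w i j) * x i ^ 2 / 2 := by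
    intro i; rw [← Finset.sum_div, ← Finset.sum_mul]
  calc ∑ i, ∑ j, (w i j * x i ^ 2 / 2 + w i j * x j ^ 2 / 2)
      = (∑ i, ∑ j, w i j * x i ^ 2 / 2) + ∑ i, ∑ j, w i j * x j ^ 2 / 2 := by
        rw [← Finset.sum_add_distrib]
        exact Finset.sum_congr rfl fun i _ => Finset.sum_add_distrib
    _ = (∑ i, (∑ j, w i j) * x i ^ 2 / 2) + ∑ j, ∑ i, w i j * x j ^ 2 / 2 := by
        rw [Finset.sum_comm (f := fun i j => w i j * x j ^ 2 / 2)]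
        exact congrArg₂ _ (Finset.sum_congr rfl fun i _ => h2 i) rfl
    _ = (∑ i, (∑ j, w i j) * x i ^ 2 / 2) + ∑ j, (∑ i, w j i) * x j ^ 2 / 2 := by
        refine congrArg₂ _ rfl (Finset.sum_congr rfl fun j _ => ?_)
        rw [← h2 j]; exact Finset.sum_congr rfl fun i _ => by rw [hsym]
    _ = ∑ i, (∑ j, w i j) * x i ^ 2 := by
        rw [← Finset.sum_add_distrib]; exact Finset.sum_congr rfl fun i _ => by ring

lemma sq_sum_le (x : ι → ℝ) : (∑ i, x i) ^ 2 ≤ (Fintype.card ι : ℝ) * ∑ i, x i ^ 2 := by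
  have h := quad_pair (fun _ _ => (1 : ℝ)) (fun _ _ => zero_le_one) (fun _ _ => rfl) x
  simp only [mul_one, Finset.sum_const, Finset.card_univ, nsmul_eq_mul] at h
  calc (∑ i, x i) ^ 2 = ∑ i, x i * (∑ j, x j) := by rw [← Finset.sum_mul]; ring
    _ = ∑ i, ∑ j, x i * x j := Finset.sum_congr rfl fun i _ => Finset.mul_sum _ _ _
    _ ≤ ∑ i, (Fintype.card ι : ℝ) * x i ^ 2 := h
    _ = (Fintype.card ι : ℝ) * ∑ i, x i ^ 2 := by rw [Finset.mul_sum]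

lemma quad_abs_le (M : Matrix ι ι ℝ) (C : ℝ) (hM : ∀ i j, |M i j| ≤ C) (x : ι → ℝ) :
    ∑ i, ∑ j, x i * M i j * x j ≤ C * (Fintype.card ι : ℝ) * ∑ i, x i ^ 2 := by
  cases isEmpty_or_nonempty ι with
  | inl h => simp
  | inr h =>
    have hC : 0 ≤ C := le_trans (abs_nonneg _) (hM (Classical.arbitrary ι) (Classical.arbitrary ι))
    have step : ∀ i j, x i * M i j * x j ≤ |x i| * C * |x j| := by
      intro i j
      calc x i * M i j * x j ≤ |x i * M i j * x j| := le_abs_self _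
        _ = |x i| * |M i j| * |x j| := by rw [abs_mul, abs_mul]
        _ ≤ |x i| * C * |x j| := by
            have := hM i j
            have h1 : |x i| * |M i j| ≤ |x i| * C := mul_le_mul_of_nonneg_left this (abs_nonneg _)
            exact mul_le_mul_of_nonneg_right h1 (abs_nonneg _)
    have h2 := quad_pair (fun _ _ => C) (fun _ _ => hC) (fun _ _ => rfl) (fun i => |x i|)
    simp only [Finset.sum_const, Finset.card_univ, nsmul_eq_mul, sq_abs] at h2
    calc ∑ i, ∑ j, x i * M i j * x j ≤ ∑ i, ∑ j, |x i| * C * |x j| :=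
          Finset.sum_le_sum fun i _ => Finset.sum_le_sum fun j _ => step i j
      _ ≤ ∑ i, ((Fintype.card ι : ℝ) * C) * x i ^ 2 := h2
      _ = C * (Fintype.card ι : ℝ) * ∑ i, x i ^ 2 := by rw [Finset.mul_sum]; ring_nf

section Graph

open PP

variable {V : Type} [Fintype V] [DecidableEq V] (G : SimpleGraph V) [DecidableRel G.Adj]

lemma popMat_symm (u v : V) : popMat G u v = popMat G v u := by
  unfold popMat
  simp only [Matrix.of_apply]
  by_cases h : u = v
  · subst h; rfl
  · rw [if_neg h, if_neg (Ne.symm h)]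
    by_cases ha : G.Adj u v
    · rw [if_pos ha, if_pos ha.symm]
    · rw [if_neg ha, if_neg (fun h' => ha h'.symm)]

lemma degree_le (u : V) : (G.degree u : ℝ) ≤ 2 * numEdges G := by
  have h1 : numEdges G = G.edgeFinset.card := by
    rw [numEdges, Nat.card_eq_fintype_card, SimpleGraph.edgeFinset_card]
  have h2 : G.degree u ≤ 2 * numEdges G := by
    rw [h1, ← SimpleGraph.sum_degrees_eq_twice_card_edges]
    exact Finset.single_le_sum (f := fun v => G.degree v) (fun i _ => Nat.zero_le _) (mem_univ u)
  exact_mod_cast h2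

lemma popMat_nonneg (u v : V) : 0 ≤ popMat G u v := by
  unfold popMat
  simp only [Matrix.of_apply]
  by_cases h : u = v
  · rw [if_pos h]
    rcases eq_or_ne (numEdges G) 0 with hm | hm
    · simp [hm]
    · have hpos : (0:ℝ) < 2 * numEdges G := by positivity
      have hd := degree_le G u
      have : (G.degree u : ℝ) / (2 * numEdges G) ≤ 1 := (div_le_one hpos).2 hd
      linarith
  · rw [if_neg h]
    split <;> positivity

lemma popMat_rowsum (u : V) : ∑ v, popMat G u v = 1 := by
  unfold popMat
  simp only [Matrix.of_apply]
  rw [← Finset.add_sum_erase _ _ (mem_univ u), if_pos rfl]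
  have h1 : ∑ v ∈ univ.erase u, (if u = v then 1 - (G.degree u : ℝ) / (2 * numEdges G)
      else if G.Adj u v then 1 / (2 * numEdges G) else 0)
      = ∑ v ∈ univ.erase u, (if G.Adj u v then 1 / (2 * (numEdges G:ℝ)) else 0) := by
    refine Finset.sum_congr rfl fun v hv => ?_
    rw [if_neg (Ne.symm (Finset.ne_of_mem_erase hv))]
  rw [h1]
  have h2 : ∑ v ∈ univ.erase u, (if G.Adj u v then 1 / (2 * (numEdges G:ℝ)) else 0)
      = ∑ v, (if G.Adj u v then 1 / (2 * (numEdges G:ℝ)) else 0) := by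
    rw [Finset.sum_erase]
    simp [G.loopless.irrefl u]
  rw [h2, ← Finset.sum_filter]
  have h3 : (univ.filter (G.Adj u)) = G.neighborFinset u := by
    simp [SimpleGraph.neighborFinset_eq_filter]
  rw [h3, Finset.sum_const, G.card_neighborFinset_eq_degree, nsmul_eq_mul, mul_one_div]
  ring

lemma popMat_colsum (v : V) : ∑ u, popMat G u v = 1 := by
  rw [show ∑ u, popMat G u v = ∑ u, popMat G v u from
    Finset.sum_congr rfl fun u _ => popMat_symm G u v]
  exact popMat_rowsum G v

lemma popMat_le_one (u v : V) : popMat G u v ≤ 1 := by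
  calc popMat G u v ≤ ∑ w, popMat G u w :=
        Finset.single_le_sum (fun w _ => popMat_nonneg G u w) (mem_univ v)
    _ = 1 := popMat_rowsum G u

lemma popQ_apply (u v : V) : popQ G u v = popMat G u v - (if u = v then 1 else 0) := by
  rw [popQ, Matrix.sub_apply, Matrix.one_apply]

lemma popQ_abs_le (u v : V) : |popQ G u v| ≤ 2 := by
  rw [popQ_apply, abs_le]
  have h1 := popMat_nonneg G u v
  have h2 := popMat_le_one G u v
  constructor <;> split <;> linarith

lemma quadP_le (x : V → ℝ) :
    ∑ u, ∑ v, x u * popMat G u v * x v ≤ ∑ v, x v ^ 2 := by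
  have h := quad_pair (fun u v => popMat G u v) (popMat_nonneg G) (popMat_symm G) x
  simpa only [popMat_rowsum, one_mul] using h

end Graph

end Stmt10Aux

end Stmt10Aux



open PP in
/-- if `|S| ≥ γ n` then `−λ(R_S) ≥ γ/τ_rel`. -/
theorem stmt10 (V : Type) [Fintype V] [DecidableEq V] (G : SimpleGraph V)
    [DecidableRel G.Adj] (hconn : G.Connected) (γ : ℝ) (hγ : 0 < γ)
    (S : Finset V) (hS : S.Nonempty) (hSc : (Sᶜ : Finset V).Nonempty)
    (hcard : γ * (Fintype.card V : ℝ) ≤ (S.card : ℝ)) :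
    γ / tauRel G ≤ -maxEig (RS G S) := by
  classical
  open Stmt10Aux in
  set n : ℝ := (Fintype.card V : ℝ) with hn
  have hV : Nonempty V := ⟨hS.choose⟩
  have hnpos : (0:ℝ) < n := by
    rw [hn]
    exact_mod_cast Fintype.card_pos (α := V)
  -- the Rayleigh set for lambdaTwo
  set L : Set ℝ := {r : ℝ | ∃ x : V → ℝ, x ≠ 0 ∧ (∑ v, x v) = 0 ∧
    r = (∑ u, ∑ v, x u * popMat G u v * x v) / (∑ v, (x v) ^ 2)} with hLdef
  have hlamL : lambdaTwo G = sSup L := rfl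
  have hLle : ∀ r ∈ L, r ≤ 1 := by
    rintro r ⟨x, hx0, -, rfl⟩
    have hB := Stmt10Aux.sum_sq_pos hx0
    rw [div_le_one hB]
    exact Stmt10Aux.quadP_le G x
  have hLbdd : BddAbove L := ⟨1, hLle⟩
  have hLne : L.Nonempty := by
    obtain ⟨u₀, hu₀⟩ := hS
    obtain ⟨v₀, hv₀⟩ := hSc
    have hv₀' : v₀ ∉ S := Finset.mem_compl.mp hv₀
    have huv : u₀ ≠ v₀ := fun h => hv₀' (h ▸ hu₀)
    refine ⟨_, fun w => (if w = u₀ then (1:ℝ) else 0) - (if w = v₀ then 1 else 0), ?_, ?_, rfl⟩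
    · intro h
      have := congrFun h u₀
      simp [if_pos rfl, if_neg huv] at this
    · rw [Finset.sum_sub_distrib]
      simp [Finset.sum_ite_eq']
  have hlam_le : lambdaTwo G ≤ 1 := by
    rw [hlamL]; exact csSup_le hLne hLle
  have hgap : 0 ≤ 1 - lambdaTwo G := by linarith
  -- the Rayleigh set for subQ G Sᶜ
  have hScNe : Nonempty {v // v ∈ Sᶜ} := ⟨⟨hSc.choose, hSc.choose_spec⟩⟩
  set K : Set ℝ := {r : ℝ | ∃ x : {v // v ∈ Sᶜ} → ℝ, x ≠ 0 ∧
    r = (∑ i, ∑ j, x i * subQ G Sᶜ i j * x j) / (∑ i, (x i) ^ 2)} with hKdef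
  have hsubQeig : maxEig (subQ G Sᶜ) = sSup K := rfl
  have hKbdd : BddAbove K := by
    refine ⟨2 * (Fintype.card {v // v ∈ Sᶜ} : ℝ), ?_⟩
    rintro r ⟨x, hx0, rfl⟩
    have hB := Stmt10Aux.sum_sq_pos hx0
    rw [div_le_iff₀ hB]
    have := Stmt10Aux.quad_abs_le (subQ G Sᶜ) 2
      (fun i j => Stmt10Aux.popQ_abs_le G i j) x
    linarith
  have hKne : K.Nonempty := by
    refine ⟨_, fun _ => 1, ?_, rfl⟩
    intro h
    have := congrFun h (Classical.arbitrary _)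
    simp at this
  -- main estimate : every Rayleigh quotient of subQ G Sᶜ is ≤ -(γ*(1-λ₂))
  have hstar : maxEig (subQ G Sᶜ) ≤ -(γ * (1 - lambdaTwo G)) := by
    rw [hsubQeig]
    refine csSup_le hKne ?_
    rintro r ⟨x, hx0, rfl⟩
    set xb : V → ℝ := fun v => if h : v ∈ Sᶜ then x ⟨v, h⟩ else 0 with hxbdef
    have hxbcoe : ∀ i : {v // v ∈ Sᶜ}, xb ↑i = x i := fun i => dif_pos i.2
    have hxbzero : ∀ v : V, v ∉ Sᶜ → xb v = 0 := fun v hv => dif_neg hv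
    -- transfer norms and sums
    have hB : (∑ i, (x i) ^ 2) = ∑ v, xb v ^ 2 := by
      rw [← Finset.sum_subset (Finset.subset_univ Sᶜ)
        (fun v _ hv => by rw [hxbzero v hv]; ring)]
      rw [← Finset.sum_coe_sort Sᶜ (fun v => xb v ^ 2)]
      exact Finset.sum_congr rfl fun i _ => by rw [hxbcoe]
    have hSsum : (∑ i, x i) = ∑ v, xb v := by
      rw [← Finset.sum_subset (Finset.subset_univ Sᶜ) (fun v _ hv => hxbzero v hv)]
      rw [← Finset.sum_coe_sort Sᶜ (fun v => xb v)]
      exact Finset.sum_congr rfl fun i _ => by rw [hxbcoe]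
    have hA : (∑ i, ∑ j, x i * subQ G Sᶜ i j * x j)
        = ∑ u, ∑ v, xb u * popQ G u v * xb v := by
      rw [← Finset.sum_subset (Finset.subset_univ Sᶜ)
        (fun u _ hu => Finset.sum_eq_zero fun v _ => by rw [hxbzero u hu]; ring)]
      rw [← Finset.sum_coe_sort Sᶜ (fun u => ∑ v, xb u * popQ G u v * xb v)]
      refine Finset.sum_congr rfl fun i _ => ?_
      rw [← Finset.sum_subset (Finset.subset_univ Sᶜ)
        (fun v _ hv => by rw [hxbzero v hv]; ring)]
      rw [← Finset.sum_coe_sort Sᶜ (fun v => xb ↑i * popQ G ↑i v * xb v)]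
      refine Finset.sum_congr rfl fun j _ => ?_
      rw [hxbcoe, hxbcoe]
      rfl
    set N : ℝ := ∑ v, xb v ^ 2 with hNdef
    have hN : 0 < N := by rw [← hB]; exact Stmt10Aux.sum_sq_pos hx0
    set c : ℝ := (∑ v, xb v) / n with hcdef
    set y : V → ℝ := fun v => xb v - c with hydef
    have hxb_split : ∀ v, xb v = y v + c := fun v => by simp [hydef]
    have hysum : (∑ v, y v) = 0 := by
      rw [hydef]
      rw [Finset.sum_sub_distrib, Finset.sum_const, Finset.card_univ, nsmul_eq_mul, hcdef]
      field_simp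
      rw [hn]; ring
    have hy0 : y ≠ 0 := by
      intro h
      have hcc : ∀ v, xb v = c := by
        intro v
        have := congrFun h v
        simp only [hydef, Pi.zero_apply] at this
        linarith
      obtain ⟨s, hs⟩ := hS
      have hs' : s ∉ Sᶜ := by simp [hs]
      have hc0 : c = 0 := by rw [← hcc s, hxbzero s hs']
      have : N = 0 := by
        rw [hNdef]
        exact Finset.sum_eq_zero fun v _ => by rw [hcc v, hc0]; ring
      linarith
    have hynorm : 0 < ∑ v, y v ^ 2 := Stmt10Aux.sum_sq_pos hy0
    have hyquad : (∑ u, ∑ v, y u * popMat G u v * y v) ≤ lambdaTwo G * ∑ v, y v ^ 2 := by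
      have hmem : ((∑ u, ∑ v, y u * popMat G u v * y v) / (∑ v, (y v) ^ 2)) ∈ L :=
        ⟨y, hy0, hysum, rfl⟩
      have := le_csSup hLbdd hmem
      rw [hlamL] at *
      rw [div_le_iff₀ hynorm] at this
      linarith
    -- expansion of quadP xb
    have hterm : ∀ u v, xb u * popMat G u v * xb v
        = y u * popMat G u v * y v + c * (popMat G u v * y v)
          + y u * popMat G u v * c + c * popMat G u v * c := by
      intro u v; rw [hxb_split u, hxb_split v]; ring
    have e2 : ∑ u, ∑ v, c * (popMat G u v * y v) = 0 := by
      rw [Finset.sum_comm]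
      have h1 : ∀ v, ∑ u, c * (popMat G u v * y v) = c * y v := by
        intro v
        rw [← Finset.mul_sum, ← Finset.sum_mul, Stmt10Aux.popMat_colsum G v, one_mul]
      rw [Finset.sum_congr rfl fun v _ => h1 v, ← Finset.mul_sum, hysum, mul_zero]
    have e3 : ∑ u, ∑ v, y u * popMat G u v * c = 0 := by
      have h1 : ∀ u, ∑ v, y u * popMat G u v * c = y u * c := by
        intro u
        calc ∑ v, y u * popMat G u v * c = (∑ v, y u * popMat G u v) * c :=
              (Finset.sum_mul _ _ _).symm
          _ = (y u * ∑ v, popMat G u v) * c := by rw [Finset.mul_sum]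
          _ = y u * c := by rw [Stmt10Aux.popMat_rowsum]; ring
      rw [Finset.sum_congr rfl fun u _ => h1 u, ← Finset.sum_mul, hysum, zero_mul]
    have e4 : ∑ u, ∑ v, c * popMat G u v * c = c ^ 2 * n := by
      have h1 : ∀ u : V, ∑ v, c * popMat G u v * c = c ^ 2 := by
        intro u
        calc ∑ v, c * popMat G u v * c = (∑ v, c * popMat G u v) * c :=
              (Finset.sum_mul _ _ _).symm
          _ = (c * ∑ v, popMat G u v) * c := by rw [Finset.mul_sum]
          _ = c ^ 2 := by rw [Stmt10Aux.popMat_rowsum]; ring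
      rw [Finset.sum_congr rfl fun u _ => h1 u, Finset.sum_const, Finset.card_univ,
        nsmul_eq_mul]
      ring
    have hquadP : ∑ u, ∑ v, xb u * popMat G u v * xb v
        = (∑ u, ∑ v, y u * popMat G u v * y v) + c ^ 2 * n := by
      calc ∑ u, ∑ v, xb u * popMat G u v * xb v
          = ∑ u, ∑ v, (y u * popMat G u v * y v + c * (popMat G u v * y v)
            + y u * popMat G u v * c + c * popMat G u v * c) :=
            Finset.sum_congr rfl fun u _ => Finset.sum_congr rfl fun v _ => hterm u v
        _ = (∑ u, ∑ v, y u * popMat G u v * y v) + (∑ u, ∑ v, c * (popMat G u v * y v))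
            + (∑ u, ∑ v, y u * popMat G u v * c) + ∑ u, ∑ v, c * popMat G u v * c := by
            simp [Finset.sum_add_distrib]
        _ = (∑ u, ∑ v, y u * popMat G u v * y v) + c ^ 2 * n := by
            rw [e2, e3, e4]; ring
    have hnorm_split : N = (∑ v, y v ^ 2) + c ^ 2 * n := by
      calc N = ∑ v, (y v + c) ^ 2 :=
            Finset.sum_congr rfl fun v _ => by rw [← hxb_split v]
        _ = ∑ v, (y v ^ 2 + (2 * c) * y v + c ^ 2) :=
            Finset.sum_congr rfl fun v _ => by ring
        _ = (∑ v, y v ^ 2) + (2 * c) * (∑ v, y v) + c ^ 2 * n := by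
            rw [Finset.sum_add_distrib, Finset.sum_add_distrib, ← Finset.mul_sum,
              Finset.sum_const, Finset.card_univ, nsmul_eq_mul]
            ring
        _ = (∑ v, y v ^ 2) + c ^ 2 * n := by rw [hysum]; ring
    -- Cauchy-Schwarz on the support
    have hcard : ((Sᶜ.card : ℝ)) ≤ (1 - γ) * n := by
      have h1 : (Sᶜ.card : ℝ) = n - S.card := by
        rw [Finset.card_compl, Nat.cast_sub (Finset.card_le_univ S)]
      rw [h1]
      linarith
    have hcs : (∑ v, xb v) ^ 2 ≤ (1 - γ) * n * N := by
      have h1 := Stmt10Aux.sq_sum_le x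
      rw [hSsum, hB] at h1
      have h2 : (Fintype.card {v // v ∈ Sᶜ} : ℝ) = (Sᶜ.card : ℝ) := by
        rw [Fintype.card_coe]
      rw [h2] at h1
      calc (∑ v, xb v) ^ 2 ≤ (Sᶜ.card : ℝ) * N := h1
        _ ≤ (1 - γ) * n * N := mul_le_mul_of_nonneg_right hcard hN.le
    have hc2 : c ^ 2 * n ≤ (1 - γ) * N := by
      have h1 : c ^ 2 * n = (∑ v, xb v) ^ 2 / n := by
        rw [hcdef]; field_simp
      rw [h1, div_le_iff₀ hnpos]
      calc (∑ v, xb v) ^ 2 ≤ (1 - γ) * n * N := hcs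
        _ = (1 - γ) * N * n := by ring
    have hyN : γ * N ≤ ∑ v, y v ^ 2 := by linarith
    -- put it together
    have hQ : (∑ u, ∑ v, xb u * popQ G u v * xb v)
        = (∑ u, ∑ v, xb u * popMat G u v * xb v) - N := by
      have h1 : ∀ u v, xb u * popQ G u v * xb v
          = xb u * popMat G u v * xb v - (if u = v then xb u * xb v else 0) := by
        intro u v
        rw [Stmt10Aux.popQ_apply]
        split <;> ring
      calc ∑ u, ∑ v, xb u * popQ G u v * xb v
          = ∑ u, ∑ v, (xb u * popMat G u v * xb v - (if u = v then xb u * xb v else 0)) :=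
            Finset.sum_congr rfl fun u _ => Finset.sum_congr rfl fun v _ => h1 u v
        _ = (∑ u, ∑ v, xb u * popMat G u v * xb v)
            - ∑ u, ∑ v, (if u = v then xb u * xb v else 0) := by
            rw [← Finset.sum_sub_distrib]
            exact Finset.sum_congr rfl fun u _ => Finset.sum_sub_distrib _ _
        _ = (∑ u, ∑ v, xb u * popMat G u v * xb v) - N := by
            have h2 : ∀ u : V, (∑ v, if u = v then xb u * xb v else 0) = xb u ^ 2 := by
              intro u
              rw [Finset.sum_ite_eq, if_pos (Finset.mem_univ u)]; ring
            rw [Finset.sum_congr rfl fun u _ => h2 u]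
    have hfinal : (∑ u, ∑ v, xb u * popQ G u v * xb v) ≤ -(γ * (1 - lambdaTwo G)) * N := by
      have hm : (1 - lambdaTwo G) * (γ * N) ≤ (1 - lambdaTwo G) * (∑ v, y v ^ 2) :=
        mul_le_mul_of_nonneg_left hyN hgap
      rw [hQ, hquadP]
      nlinarith [hyquad, hnorm_split]
    rw [hA, hB, div_le_iff₀ hN]
    exact hfinal
  -- RS bound: maxEig (RS G S) ≤ maxEig (subQ G Sᶜ)
  have hRS : maxEig (RS G S) ≤ maxEig (subQ G Sᶜ) := by
    refine csSup_le ?_ ?_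
    · refine ⟨_, fun _ => (1:ℝ), ?_, rfl⟩
      intro h
      have := congrFun h (Classical.arbitrary V)
      simp at this
    · rintro r ⟨x, hx0, rfl⟩
      have hN : 0 < ∑ v, x v ^ 2 := Stmt10Aux.sum_sq_pos hx0
      rw [div_le_iff₀ hN]
      have hsplit : ∑ u, ∑ v, x u * RS G S u v * x v
          = (∑ u ∈ S, ∑ v, x u * RS G S u v * x v)
            + ∑ u ∈ Sᶜ, ∑ v, x u * RS G S u v * x v :=
        (Finset.sum_add_sum_compl S _).symm
      have hSpart : ∑ u ∈ S, ∑ v, x u * RS G S u v * x v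
          = maxEig (subQ G Sᶜ) * ∑ u ∈ S, x u ^ 2 := by
        rw [Finset.mul_sum]
        refine Finset.sum_congr rfl fun u hu => ?_
        have h1 : ∀ v, x u * RS G S u v * x v
            = if u = v then x u * maxEig (subQ G Sᶜ) * x v else 0 := by
          intro v
          rw [RS]
          simp only [Matrix.of_apply, if_pos hu]
          split <;> ring
        rw [Finset.sum_congr rfl fun v _ => h1 v, Finset.sum_ite_eq,
          if_pos (Finset.mem_univ u)]
        ring
      have hCpart : ∑ u ∈ Sᶜ, ∑ v, x u * RS G S u v * x v
          = ∑ u ∈ Sᶜ, ∑ v ∈ Sᶜ, x u * popQ G u v * x v := by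
        refine Finset.sum_congr rfl fun u hu => ?_
        have hu' : u ∉ S := Finset.mem_compl.mp hu
        rw [← Finset.sum_add_sum_compl S (fun v => x u * RS G S u v * x v)]
        have hz : ∑ v ∈ S, x u * RS G S u v * x v = 0 := by
          refine Finset.sum_eq_zero fun v hv => ?_
          rw [RS]
          simp only [Matrix.of_apply, if_neg hu', if_pos hv]
          ring
        rw [hz, zero_add]
        refine Finset.sum_congr rfl fun v hv => ?_
        rw [RS]
        simp only [Matrix.of_apply, if_neg hu', if_neg (Finset.mem_compl.mp hv)]
      set x' : {v // v ∈ Sᶜ} → ℝ := fun i => x ↑i with hx'def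
      have hsub : ∑ u ∈ Sᶜ, ∑ v ∈ Sᶜ, x u * popQ G u v * x v
          = ∑ i, ∑ j, x' i * subQ G Sᶜ i j * x' j := by
        rw [← Finset.sum_coe_sort Sᶜ (fun u => ∑ v ∈ Sᶜ, x u * popQ G u v * x v)]
        refine Finset.sum_congr rfl fun i _ => ?_
        rw [← Finset.sum_coe_sort Sᶜ (fun v => x ↑i * popQ G ↑i v * x v)]
        rfl
      have hsub_le : ∑ i, ∑ j, x' i * subQ G Sᶜ i j * x' j
          ≤ maxEig (subQ G Sᶜ) * ∑ i, x' i ^ 2 := by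
        rcases eq_or_ne x' 0 with h0 | h0
        · simp [h0]
        · have hmem : ((∑ i, ∑ j, x' i * subQ G Sᶜ i j * x' j) / (∑ i, (x' i) ^ 2)) ∈ K :=
            ⟨x', h0, rfl⟩
          have hle := le_csSup hKbdd hmem
          rw [← hsubQeig] at hle
          have hn' := Stmt10Aux.sum_sq_pos h0
          rw [div_le_iff₀ hn'] at hle
          linarith
      have hx'N : (∑ i, x' i ^ 2) = ∑ v ∈ Sᶜ, x v ^ 2 :=
        Finset.sum_coe_sort Sᶜ (fun v => x v ^ 2)
      calc ∑ u, ∑ v, x u * RS G S u v * x v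
          = maxEig (subQ G Sᶜ) * (∑ u ∈ S, x u ^ 2)
            + ∑ i, ∑ j, x' i * subQ G Sᶜ i j * x' j := by
            rw [hsplit, hSpart, hCpart, hsub]
        _ ≤ maxEig (subQ G Sᶜ) * (∑ u ∈ S, x u ^ 2)
            + maxEig (subQ G Sᶜ) * ∑ i, x' i ^ 2 := by linarith [hsub_le]
        _ = maxEig (subQ G Sᶜ) * ((∑ u ∈ S, x u ^ 2) + ∑ v ∈ Sᶜ, x v ^ 2) := by
            rw [hx'N]; ring
        _ = maxEig (subQ G Sᶜ) * ∑ v, x v ^ 2 := by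
            rw [Finset.sum_add_sum_compl]
  -- conclusion
  have htau : γ / tauRel G = γ * (1 - lambdaTwo G) := by
    rw [tauRel, div_div_eq_mul_div, div_one]
  rw [htau]
  linarith [hstar, hRS]
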